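/- arXiv:1904.03600 — 5 statements merged into one kernel-verified Lean document; each statement's English description precedes it below -/
import Mathlib

section
/- Let C₁ and C₂ be submodules of ℤ₄ⁿ and let C = vC₁ ⊕ (1-v)C₂ ⊆ Rⁿ where R = ℤ₄[v]/(v²-v). Then C is invariant under the cyclic shift on Rⁿ if and only if both C₁ and C₂ are invariant under the cyclic shift on ℤ₄ⁿ. -/
/-!
Evaluating `v` at the idempotents `1` and `0` of `ℤ₄` gives two ring maps `R → ℤ₄` which read off
`a` and `b` from `v a + (1 - v) b`, so `v C₁ ⊕ (1 - v) C₂` is the injective image of `C₁ × C₂`.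
The shift acts componentwise on this image, and a product of nonempty sets determines its factors.
-/

open Polynomial

/-- The ring `R = ℤ₄[v]/(v² - v)`. -/
abbrev R4v : Type :=
  Polynomial (ZMod 4) ⧸ Ideal.span ({X ^ 2 - X} : Set (Polynomial (ZMod 4)))

/-- The image of `v` in `R4v`. -/
noncomputable def vR : R4v :=
  Ideal.Quotient.mk (Ideal.span ({X ^ 2 - X} : Set (Polynomial (ZMod 4)))) X

/-- The embedding `ℤ₄ → R`. -/
noncomputable def ιR : ZMod 4 →+* R4v :=
  (Ideal.Quotient.mk (Ideal.span ({X ^ 2 - X} : Set (Polynomial (ZMod 4))))).comp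
    (Polynomial.C : ZMod 4 →+* Polynomial (ZMod 4))

/-- The cyclic shift `ρ(c₀, …, c_{n-1}) = (c_{n-1}, c₀, …, c_{n-2})`. -/
def cycShift {α : Type*} {n : ℕ} [NeZero n] (c : Fin n → α) : Fin n → α :=
  fun i => c (i - 1)

/-- The code `v C₁ ⊕ (1-v) C₂ ⊆ Rⁿ` built from two `ℤ₄`-codes. -/
noncomputable def mixCode {n : ℕ} (A B : Set (Fin n → ZMod 4)) : Set (Fin n → R4v) :=
  {x | ∃ c₁ ∈ A, ∃ c₂ ∈ B, x = fun i => vR * ιR (c₁ i) + (1 - vR) * ιR (c₂ i)}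


noncomputable def R4v.evalIdem (c : ZMod 4) (hc : IsIdempotentElem c) : R4v →+* ZMod 4 :=
  Ideal.Quotient.lift _ (evalRingHom c) fun p hp => by
    obtain ⟨q, rfl⟩ := Ideal.mem_span_singleton'.mp hp
    simp [sq, hc.eq]

@[simp]
lemma R4v.evalIdem_vR (c : ZMod 4) (hc : IsIdempotentElem c) : R4v.evalIdem c hc vR = c := by
  simp [R4v.evalIdem, vR]

@[simp]
lemma R4v.evalIdem_ιR (c : ZMod 4) (hc : IsIdempotentElem c) (a : ZMod 4) :
    R4v.evalIdem c hc (ιR a) = a := by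
  simp [R4v.evalIdem, ιR]

section

variable {n : ℕ}

noncomputable def mixWord (p : (Fin n → ZMod 4) × (Fin n → ZMod 4)) : Fin n → R4v :=
  fun i => vR * ιR (p.1 i) + (1 - vR) * ιR (p.2 i)

lemma mixWord_injective : Function.Injective (mixWord (n := n)) := by
  intro p q h
  have component (c : ZMod 4) (hc : IsIdempotentElem c) (i : Fin n) :
      c * p.1 i + (1 - c) * p.2 i = c * q.1 i + (1 - c) * q.2 i := by
    simpa [mixWord] using congrArg (R4v.evalIdem c hc) (congrFun h i)
  ext i
  · simpa using component 1 .one i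
  · simpa using component 0 .zero i

lemma mixCode_eq_image (A B : Set (Fin n → ZMod 4)) : mixCode A B = mixWord '' A ×ˢ B := by
  ext x
  simp only [Set.mem_image, Set.mem_prod, Prod.exists, and_assoc, exists_and_left, eq_comm]
  rfl

lemma mixCode_inj {A B A' B' : Set (Fin n → ZMod 4)} (hA : A.Nonempty) (hB : B.Nonempty) :
    mixCode A B = mixCode A' B' ↔ A = A' ∧ B = B' := by
  rw [mixCode_eq_image, mixCode_eq_image, mixWord_injective.image_injective.eq_iff,
    Set.prod_eq_prod_iff_of_nonempty (hA.prod hB)]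

lemma cycShift_image_mixCode [NeZero n] (A B : Set (Fin n → ZMod 4)) :
    cycShift '' mixCode A B = mixCode (cycShift '' A) (cycShift '' B) := by
  rw [mixCode_eq_image, mixCode_eq_image, Set.prod_image_image_eq, Set.image_image,
    Set.image_image]
  rfl

end

theorem stmt9 (n : ℕ) [NeZero n]
    (C₁ C₂ : Submodule (ZMod 4) (Fin n → ZMod 4)) :
    cycShift '' mixCode (C₁ : Set (Fin n → ZMod 4)) (C₂ : Set (Fin n → ZMod 4))
        = mixCode (C₁ : Set (Fin n → ZMod 4)) (C₂ : Set (Fin n → ZMod 4)) ↔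
      (cycShift '' (C₁ : Set (Fin n → ZMod 4)) = (C₁ : Set (Fin n → ZMod 4)) ∧
        cycShift '' (C₂ : Set (Fin n → ZMod 4)) = (C₂ : Set (Fin n → ZMod 4))) := by
  rw [cycShift_image_mixCode]
  exact mixCode_inj (C₁.nonempty.image _) (C₂.nonempty.image _)
end

section
/- Let C = vC₁ ⊕ (1-v)C₂ be a linear code of length n over R = ℤ₄[v]/(v²-v), where C₁, C₂ are linear codes over ℤ₄. Then the dual code satisfies C^⊥ = vC₁^⊥ ⊕ (1-v)C₂^⊥. -/
open Polynomial

/-- The dual of a code under the standard inner product `h·k = Σᵢ hᵢ kᵢ`. -/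
def dualCode {S : Type*} [CommRing S] {n : ℕ} (D : Set (Fin n → S)) : Set (Fin n → S) :=
  {h | ∀ k ∈ D, ∑ i, h i * k i = 0}

/-
Evaluating at `v = 1` and at `v = 0` identifies `R = ℤ₄[v]/(v² - v)` with `ℤ₄ × ℤ₄`, the idempotents `v`
and `1 - v` splitting every `x ∈ R` as `v·x(1) + (1 - v)·x(0)`. Under this splitting the inner product
of `h` with `v c₁ + (1 - v) c₂` is `v (h(1)·c₁) + (1 - v) (h(0)·c₂)`, which vanishes iff both
`ℤ₄`-inner products do. As both codes contain `0`, `h ∈ C^⊥` iff `h(1) ∈ C₁^⊥` and `h(0) ∈ C₂^⊥`,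
which is exactly membership in `vC₁^⊥ ⊕ (1 - v)C₂^⊥`.
-/

theorem X_sq_sub_X_dvd {S : Type*} [CommRing S] {g : S[X]} (h0 : g.eval 0 = 0)
    (h1 : g.eval 1 = 0) : X ^ 2 - X ∣ g := by
  obtain ⟨h, rfl⟩ : X ∣ g := by simpa using dvd_iff_isRoot.mpr h0
  obtain ⟨k, rfl⟩ := dvd_iff_isRoot.mpr (show h.IsRoot 1 by simpa using h1)
  exact ⟨k, by rw [C_1]; ring⟩

namespace R4v

theorem vR_mul_self : vR * vR = vR := by
  rw [← sub_eq_zero, vR, ← map_mul, ← map_sub, Ideal.Quotient.eq_zero_iff_mem]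
  exact Ideal.subset_span (by simp only [Set.mem_singleton_iff]; ring)

noncomputable def evalAt (a : ZMod 4) (ha : a ^ 2 - a = 0) : R4v →+* ZMod 4 :=
  Ideal.Quotient.lift _ (evalRingHom a) fun p hp => by
    obtain ⟨q, rfl⟩ := Ideal.mem_span_singleton.mp hp
    simp [ha]

@[simp]
theorem evalAt_ιR (a : ZMod 4) (ha : a ^ 2 - a = 0) (b : ZMod 4) : evalAt a ha (ιR b) = b := by
  simp [evalAt, ιR]

@[simp]
theorem evalAt_vR (a : ZMod 4) (ha : a ^ 2 - a = 0) : evalAt a ha vR = a := by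
  simp [evalAt, vR]

noncomputable abbrev evalZero : R4v →+* ZMod 4 := evalAt 0 (by decide)

noncomputable abbrev evalOne : R4v →+* ZMod 4 := evalAt 1 (by decide)

theorem eq_vR_mul_add (x : R4v) :
    x = vR * ιR (evalOne x) + (1 - vR) * ιR (evalZero x) := by
  obtain ⟨p, rfl⟩ := Ideal.Quotient.mk_surjective x
  have hsplit : vR * ιR (p.eval 1) + (1 - vR) * ιR (p.eval 0)
      = Ideal.Quotient.mk _ (X * C (p.eval 1) + (1 - X) * C (p.eval 0)) := by
    simp only [map_add, map_mul, map_sub, map_one]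
    rfl
  simp only [evalAt, Ideal.Quotient.lift_mk, coe_evalRingHom]
  rw [hsplit, eq_comm, Ideal.Quotient.eq, Ideal.mem_span_singleton]
  exact X_sq_sub_X_dvd (by simp) (by simp)

theorem vR_mul_add_mul (a b c d : ZMod 4) :
    (vR * ιR a + (1 - vR) * ιR b) * (vR * ιR c + (1 - vR) * ιR d)
      = vR * ιR (a * c) + (1 - vR) * ιR (b * d) := by
  rw [map_mul, map_mul]
  linear_combination (ιR a * ιR c - ιR a * ιR d - ιR b * ιR c + ιR b * ιR d) * vR_mul_self

theorem vR_mul_add_eq_zero_iff (a b : ZMod 4) :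
    vR * ιR a + (1 - vR) * ιR b = 0 ↔ a = 0 ∧ b = 0 := by
  refine ⟨fun h => ⟨?_, ?_⟩, fun ⟨ha, hb⟩ => by simp [ha, hb]⟩
  · simpa using congrArg evalOne h
  · simpa using congrArg evalZero h

end R4v

open R4v

theorem mem_mixCode_iff {n : ℕ} {A B : Set (Fin n → ZMod 4)} {h : Fin n → R4v} :
    h ∈ mixCode A B ↔ evalOne ∘ h ∈ A ∧ evalZero ∘ h ∈ B := by
  constructor
  · rintro ⟨c₁, hc₁, c₂, hc₂, rfl⟩
    simpa [Function.comp_def] using And.intro hc₁ hc₂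
  · exact fun ⟨h₁, h₂⟩ => ⟨_, h₁, _, h₂, funext fun i => eq_vR_mul_add (h i)⟩

theorem sum_mul_vR_mul_add {n : ℕ} (h : Fin n → R4v) (c₁ c₂ : Fin n → ZMod 4) :
    ∑ i, h i * (vR * ιR (c₁ i) + (1 - vR) * ιR (c₂ i))
      = vR * ιR (∑ i, evalOne (h i) * c₁ i) + (1 - vR) * ιR (∑ i, evalZero (h i) * c₂ i) := by
  conv_lhs => rw [funext fun i => eq_vR_mul_add (h i)]
  simp only [vR_mul_add_mul, map_sum, Finset.mul_sum, Finset.sum_add_distrib]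

theorem mem_dualCode_mixCode_iff {n : ℕ} {A B : Set (Fin n → ZMod 4)} (hA : 0 ∈ A) (hB : 0 ∈ B)
    {h : Fin n → R4v} :
    h ∈ dualCode (mixCode A B) ↔ evalOne ∘ h ∈ dualCode A ∧ evalZero ∘ h ∈ dualCode B := by
  simp only [dualCode, mixCode, Set.mem_ofPred_eq, Function.comp_apply]
  constructor
  · intro hh
    constructor
    · intro c₁ hc₁
      have := hh _ ⟨c₁, hc₁, 0, hB, rfl⟩
      rw [sum_mul_vR_mul_add, vR_mul_add_eq_zero_iff] at this
      exact this.1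
    · intro c₂ hc₂
      have := hh _ ⟨0, hA, c₂, hc₂, rfl⟩
      rw [sum_mul_vR_mul_add, vR_mul_add_eq_zero_iff] at this
      exact this.2
  · rintro ⟨h₁, h₂⟩ k ⟨c₁, hc₁, c₂, hc₂, rfl⟩
    rw [sum_mul_vR_mul_add, vR_mul_add_eq_zero_iff]
    exact ⟨h₁ c₁ hc₁, h₂ c₂ hc₂⟩

theorem stmt10 (n : ℕ) (C₁ C₂ : Submodule (ZMod 4) (Fin n → ZMod 4)) :
    dualCode (mixCode (C₁ : Set (Fin n → ZMod 4)) (C₂ : Set (Fin n → ZMod 4)))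
      = mixCode (dualCode (C₁ : Set (Fin n → ZMod 4)))
          (dualCode (C₂ : Set (Fin n → ZMod 4))) := by
  ext h
  rw [mem_dualCode_mixCode_iff C₁.zero_mem C₂.zero_mem, mem_mixCode_iff]
end

section
/- Let C = vC₁ ⊕ (1-v)C₂ be a linear code over R = ℤ₄[v]/(v²-v) with C₁, C₂ linear codes over ℤ₄. Then Hull(C) = v·Hull(C₁) ⊕ (1-v)·Hull(C₂), where Hull(D) := D ∩ D^⊥. -/
/-!
`v` is an idempotent of `R`, and evaluation at `v = 1` and at `v = 0` identifies
`R` with `ℤ₄ × ℤ₄`. Hence the inner product splits componentwise,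
`(v c₁ + (1-v) c₂)·(v d₁ + (1-v) d₂) = v (c₁·d₁) + (1-v) (c₂·d₂)`, and it vanishes iff
`c₁·d₁ = 0` and `c₂·d₂ = 0`. Testing a codeword against `v d₁` and `(1-v) d₂` (possible
since `0 ∈ C₁, C₂`) shows that it lies in `C^⊥` iff its components lie in `C₁^⊥` and `C₂^⊥`.
-/

open Polynomial

/-- The hull `Hull(D) = D ∩ D^⊥`. -/
def hullCode {S : Type*} [CommRing S] {n : ℕ} (D : Set (Fin n → S)) : Set (Fin n → S) :=
  D ∩ dualCode D

namespace IsIdempotentElem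

variable {S : Type*} [CommRing S] {e : S}

theorem mul_add_one_sub_mul_mul (he : IsIdempotentElem e) (a b c d : S) :
    (e * a + (1 - e) * b) * (e * c + (1 - e) * d) = e * (a * c) + (1 - e) * (b * d) := by
  linear_combination (a * c - a * d - b * c + b * d) * he.eq

theorem sum_mul_add_one_sub_mul_mul {T ι : Type*} [CommRing T] [Fintype ι]
    (he : IsIdempotentElem e) (f : T →+* S) (c₁ c₂ d₁ d₂ : ι → T) :
    ∑ i, (e * f (c₁ i) + (1 - e) * f (c₂ i)) * (e * f (d₁ i) + (1 - e) * f (d₂ i))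
      = e * f (∑ i, c₁ i * d₁ i) + (1 - e) * f (∑ i, c₂ i * d₂ i) := by
  simp only [map_sum, Finset.mul_sum, ← Finset.sum_add_distrib, he.mul_add_one_sub_mul_mul,
    map_mul]

end IsIdempotentElem

theorem isIdempotentElem_vR : IsIdempotentElem vR := by
  have h : vR * vR - vR =
      Ideal.Quotient.mk (Ideal.span ({X ^ 2 - X} : Set (ZMod 4)[X])) (X ^ 2 - X) := by
    simp [vR, sq]
  rw [IsIdempotentElem, ← sub_eq_zero, h, Ideal.Quotient.eq_zero_iff_mem]
  exact Ideal.subset_span rfl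

noncomputable def evalR4v (a : ZMod 4) (ha : a ^ 2 - a = 0) : R4v →+* ZMod 4 :=
  Ideal.Quotient.lift _ (evalRingHom a) fun p hp => by
    obtain ⟨q, rfl⟩ := Ideal.mem_span_singleton'.mp hp
    simp [ha]

theorem evalR4v_vR (a : ZMod 4) (ha : a ^ 2 - a = 0) : evalR4v a ha vR = a := by
  simp [evalR4v, vR]

theorem evalR4v_ιR (a : ZMod 4) (ha : a ^ 2 - a = 0) (b : ZMod 4) :
    evalR4v a ha (ιR b) = b := by
  simp [evalR4v, ιR]

theorem vR_mul_add_one_sub_vR_mul_eq_zero {a b : ZMod 4} :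
    vR * ιR a + (1 - vR) * ιR b = 0 ↔ a = 0 ∧ b = 0 := by
  refine ⟨fun h => ⟨?_, ?_⟩, fun ⟨ha, hb⟩ => by simp [ha, hb]⟩
  · simpa [evalR4v_vR, evalR4v_ιR] using congrArg (evalR4v 1 (by decide)) h
  · simpa [evalR4v_vR, evalR4v_ιR] using congrArg (evalR4v 0 (by decide)) h

theorem sum_mixed_mul_eq_zero_iff {n : ℕ} (c₁ c₂ d₁ d₂ : Fin n → ZMod 4) :
    ∑ i, (vR * ιR (c₁ i) + (1 - vR) * ιR (c₂ i)) * (vR * ιR (d₁ i) + (1 - vR) * ιR (d₂ i)) = 0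
      ↔ ∑ i, c₁ i * d₁ i = 0 ∧ ∑ i, c₂ i * d₂ i = 0 := by
  rw [isIdempotentElem_vR.sum_mul_add_one_sub_mul_mul, vR_mul_add_one_sub_vR_mul_eq_zero]

theorem stmt11 (n : ℕ) (C₁ C₂ : Submodule (ZMod 4) (Fin n → ZMod 4)) :
    hullCode (mixCode (C₁ : Set (Fin n → ZMod 4)) (C₂ : Set (Fin n → ZMod 4)))
      = mixCode (hullCode (C₁ : Set (Fin n → ZMod 4)))
          (hullCode (C₂ : Set (Fin n → ZMod 4))) := by
  ext x
  constructor
  · rintro ⟨⟨c₁, hc₁, c₂, hc₂, rfl⟩, hdual⟩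
    refine ⟨c₁, ⟨hc₁, fun d₁ hd₁ => ?_⟩, c₂, ⟨hc₂, fun d₂ hd₂ => ?_⟩, rfl⟩
    · exact ((sum_mixed_mul_eq_zero_iff c₁ c₂ d₁ 0).mp
        (hdual _ ⟨d₁, hd₁, 0, C₂.zero_mem, rfl⟩)).1
    · exact ((sum_mixed_mul_eq_zero_iff c₁ c₂ 0 d₂).mp
        (hdual _ ⟨0, C₁.zero_mem, d₂, hd₂, rfl⟩)).2
  · rintro ⟨c₁, ⟨hc₁, hdual₁⟩, c₂, ⟨hc₂, hdual₂⟩, rfl⟩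
    refine ⟨⟨c₁, hc₁, c₂, hc₂, rfl⟩, ?_⟩
    rintro _ ⟨d₁, hd₁, d₂, hd₂, rfl⟩
    exact (sum_mixed_mul_eq_zero_iff c₁ c₂ d₁ d₂).mpr ⟨hdual₁ d₁ hd₁, hdual₂ d₂ hd₂⟩
end

section
/- Let ξ : Rⁿ → ℤ₄^{2n} be the coordinatewise Gray map given by ξ(a+bv) = (a, 2b+a) in interleaved coordinates as in the paper (so that the image of the i-th R-coordinate occupies positions i and n+i appropriately). Then for every k ∈ Rⁿ, ξ(ρ(k)) = ρ²(ξ(k)), where ρ denotes the cyclic shift on each module. -/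
instance twoMulNeZero (n : ℕ) [NeZero n] : NeZero (2 * n) :=
  ⟨by have := NeZero.ne n; omega⟩

/-- The interleaved Gray map `ξ : Rⁿ → ℤ₄^{2n}`, where an element `a + b v` of
`R = ℤ₄[v]/(v²-v)` is represented by the pair `(a, b)`:
`ξ(c₀, …, c_{n-1}) = (a₀, 2b₀+a₀, a₁, 2b₁+a₁, …, a_{n-1}, 2b_{n-1}+a_{n-1})`. -/
def grayMap {n : ℕ} (k : Fin n → ZMod 4 × ZMod 4) : Fin (2 * n) → ZMod 4 :=
  fun j =>
    if j.val % 2 = 0 then (k ⟨j.val / 2, by have := j.isLt; omega⟩).1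
    else 2 * (k ⟨j.val / 2, by have := j.isLt; omega⟩).2
      + (k ⟨j.val / 2, by have := j.isLt; omega⟩).1

theorem Fin.val_sub_one_sub_one_add_two_mod {m : ℕ} [NeZero m] (j : Fin m) :
    ((j - 1 - 1 : Fin m).val + 2) % m = j.val := by
  have h : j - 1 - 1 + 1 + 1 = j := by abel
  conv_rhs => rw [← h]
  simp only [Fin.val_add, Fin.val_one', Nat.add_mod_mod, Nat.mod_add_mod, add_assoc]

section
variable {n : ℕ} [NeZero n] (j : Fin (2 * n))

theorem Fin.val_sub_one_sub_one_mod_two : (j - 1 - 1 : Fin (2 * n)).val % 2 = j.val % 2 := by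
  rw [← Fin.val_sub_one_sub_one_add_two_mod j, Nat.mod_mul_right_mod, Nat.add_mod_right]

theorem Fin.mk_val_sub_one_sub_one_div_two :
    (⟨(j - 1 - 1 : Fin (2 * n)).val / 2, by omega⟩ : Fin n) = ⟨j.val / 2, by omega⟩ - 1 := by
  rw [eq_sub_iff_add_eq, Fin.ext_iff, Fin.val_add, Fin.val_one']
  dsimp only
  conv_rhs => rw [← Fin.val_sub_one_sub_one_add_two_mod j, Nat.mod_mul_right_div_self]
  rw [Nat.add_div_right _ two_pos, Nat.add_mod_mod]

end

theorem stmt12 (n : ℕ) [NeZero n] (k : Fin n → ZMod 4 × ZMod 4) :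
    grayMap (cycShift k) = cycShift (cycShift (grayMap k)) := by
  funext j
  simp only [grayMap, cycShift, ← Fin.mk_val_sub_one_sub_one_div_two,
    Fin.val_sub_one_sub_one_mod_two]
end

section
/- If C is a cyclic code of length n over R = ℤ₄[v]/(v²-v), then its Gray image ξ(C) ⊆ ℤ₄^{2n} is a 2-quasi-cyclic code, i.e., ξ(C) is invariant under the square of the cyclic shift on ℤ₄^{2n}. -/
/-- Multiplication in `R = ℤ₄[v]/(v²-v)` in the coordinates `(a, b) ↔ a + b v`:
`(a+bv)(c+dv) = ac + (ad+bc+bd)v`. -/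
def Rmul (r x : ZMod 4 × ZMod 4) : ZMod 4 × ZMod 4 :=
  (r.1 * x.1, r.1 * x.2 + r.2 * x.1 + r.2 * x.2)

namespace Fin

variable {n : ℕ}

def half (j : Fin (2 * n)) : Fin n :=
  ⟨j.val / 2, by omega⟩

theorem half_add_one_add_one [NeZero n] (i : Fin (2 * n)) :
    half (i + 1 + 1) = half i + 1 := by
  ext
  simp only [half, Fin.val_add, Fin.val_one', Nat.add_mod_mod, Nat.mod_add_mod,
    Nat.mod_mul_right_div_self]
  congr 1
  omega

theorem val_add_one_add_one_mod_two [NeZero n] (i : Fin (2 * n)) :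
    (i + 1 + 1).val % 2 = i.val % 2 := by
  simp only [Fin.val_add, Fin.val_one', Nat.add_mod_mod, Nat.mod_add_mod,
    Nat.mod_mul_right_mod]
  omega

end Fin

theorem cycShift_apply {α : Type*} {n : ℕ} [NeZero n] (c : Fin n → α) (i : Fin n) :
    cycShift c i = c (i - 1) := rfl

theorem grayMap_apply {n : ℕ} (k : Fin n → ZMod 4 × ZMod 4) (j : Fin (2 * n)) :
    grayMap k j = if j.val % 2 = 0 then (k j.half).1 else 2 * (k j.half).2 + (k j.half).1 :=
  rfl

theorem grayMap_cycShift {n : ℕ} [NeZero n] (k : Fin n → ZMod 4 × ZMod 4) :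
    grayMap (cycShift k) = cycShift (cycShift (grayMap k)) := by
  funext j
  obtain ⟨i, rfl⟩ : ∃ i, j = i + 1 + 1 := ⟨j - 1 - 1, by simp⟩
  simp only [cycShift_apply, grayMap_apply, Fin.half_add_one_add_one,
    Fin.val_add_one_add_one_mod_two, add_sub_cancel_right]

theorem stmt13_general (n : ℕ) [NeZero n] (C : Set (Fin n → ZMod 4 × ZMod 4))
    (hcyc : cycShift '' C = C) :
    cycShift '' (cycShift '' (grayMap '' C)) = grayMap '' C := by
  calc cycShift '' (cycShift '' (grayMap '' C))
      = grayMap '' (cycShift '' C) := by simp only [Set.image_image, grayMap_cycShift]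
    _ = grayMap '' C := by rw [hcyc]

theorem stmt13 (n : ℕ) [NeZero n] (C : Set (Fin n → ZMod 4 × ZMod 4))
    (hzero : (0 : Fin n → ZMod 4 × ZMod 4) ∈ C)
    (hadd : ∀ x ∈ C, ∀ y ∈ C, x + y ∈ C)
    (hsmul : ∀ r : ZMod 4 × ZMod 4, ∀ x ∈ C, (fun i => Rmul r (x i)) ∈ C)
    (hcyc : cycShift '' C = C) :
    cycShift '' (cycShift '' (grayMap '' C)) = grayMap '' C :=
  stmt13_general n C hcyc
end
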